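/- arXiv:1905.01660 — 2 statements merged into one kernel-verified Lean document; each statement's English description precedes it below -/
import Mathlib

section
/- Chain-folding lemma: Let β ∈ I(d), let U be a finite multiset of elements of O(β), and let D = (r₁,c₁),…,(r_t,c_t) be an extended β-chain each of whose elements occurs in the multiset U + U^#. Define φ(r,c) = (r,c) if r ≤ c*, and φ(r,c) = (c*, r*) otherwise. Then: (i) the pairs φ(r₁,c₁),…,φ(r_t,c_t) are pairwise distinct elements of O(β), each of which occurs in U; (ii) these pairs can be enumerated as an extended β-chain C (i.e., with strictly decreasing rows and strictly increasing columns); and (iii) every element of D occurs in the multiset C + C^#, where C is regarded as a multiset. -/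
/-!
Every pair occurring in `U + U^#` lies in the square `[0, 2d+1]²`, where `j ↦ j*` is an
involution, and folding it by `φ` gives back the element of `U` it came from. On that
square `φ` preserves the chain order (strictly smaller row, strictly larger column): in the
mixed cases the inequality `r ≤ c*` of the unfolded pair is what compares it with the
reflected one. So `φ ∘ D` is already a chain in the given order, which makes it injective,
and each element of `D` is either its fold or the reflection of its fold.
-/

/-- `I(d)`: the set of `d`-element subsets `β` of `{1,…,2d}` such that for every
`j ∈ {1,…,2d}` exactly one of `j` and `j* = 2d+1-j` belongs to `β`. -/
def IsId (d : ℕ) (β : Finset ℕ) : Prop :=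
  β ⊆ Finset.Icc 1 (2 * d) ∧ β.card = d ∧
    ∀ j ∈ Finset.Icc 1 (2 * d), Xor' (j ∈ β) ((2 * d + 1 - j) ∈ β)

/-- `A(β) = {(r,c) : r ∈ {1,…,2d}∖β, c ∈ β}`. -/
def Apairs (d : ℕ) (β : Finset ℕ) : Set (ℕ × ℕ) :=
  {p | p.1 ∈ Finset.Icc 1 (2 * d) ∧ p.1 ∉ β ∧ p.2 ∈ β}

/-- The reflection `(r,c)^# = (c*, r*)`. -/
def reflPair (d : ℕ) (p : ℕ × ℕ) : ℕ × ℕ := (2 * d + 1 - p.2, 2 * d + 1 - p.1)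

/-- `O(β) = {(r,c) ∈ A(β) : r ≤ c*}`. -/
def Opairs (d : ℕ) (β : Finset ℕ) : Set (ℕ × ℕ) :=
  {p ∈ Apairs d β | p.1 ≤ 2 * d + 1 - p.2}

/-- The folding map `φ`: the identity on pairs with `r ≤ c*`, and the reflection
`(r,c) ↦ (c*, r*)` on pairs with `r > c*`. -/
def phiFold (d : ℕ) (p : ℕ × ℕ) : ℕ × ℕ :=
  if p.1 ≤ 2 * d + 1 - p.2 then p else reflPair d p

section Folding

variable {d : ℕ} {β : Finset ℕ}

theorem fst_add_snd_le_of_mem_Opairs {q : ℕ × ℕ} (hq : q ∈ Opairs d β) :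
    q.1 + q.2 ≤ 2 * d + 1 := by
  obtain ⟨⟨hq₁, -, -⟩, hle⟩ := hq
  have := (Finset.mem_Icc.mp hq₁).1
  omega

theorem phiFold_of_mem_Opairs {q : ℕ × ℕ} (hq : q ∈ Opairs d β) : phiFold d q = q :=
  if_pos hq.2

theorem phiFold_reflPair_of_fst_add_snd_le {q : ℕ × ℕ} (hq : q.1 + q.2 ≤ 2 * d + 1) :
    phiFold d (reflPair d q) = q := by
  unfold phiFold reflPair
  split_ifs <;> ext <;> simp only <;> omega

theorem phiFold_mem_of_mem_add_map_reflPair {U : Multiset (ℕ × ℕ)}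
    (hU : ∀ q ∈ U, q ∈ Opairs d β) {p : ℕ × ℕ} (hp : p ∈ U + U.map (reflPair d)) :
    phiFold d p ∈ U := by
  rcases Multiset.mem_add.mp hp with hp | hp
  · rwa [phiFold_of_mem_Opairs (hU p hp)]
  · obtain ⟨q, hq, rfl⟩ := Multiset.mem_map.mp hp
    rwa [phiFold_reflPair_of_fst_add_snd_le (fst_add_snd_le_of_mem_Opairs (hU q hq))]

theorem le_and_le_of_mem_add_map_reflPair {U : Multiset (ℕ × ℕ)}
    (hU : ∀ q ∈ U, q ∈ Opairs d β) {p : ℕ × ℕ} (hp : p ∈ U + U.map (reflPair d)) :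
    p.1 ≤ 2 * d + 1 ∧ p.2 ≤ 2 * d + 1 := by
  rcases Multiset.mem_add.mp hp with hp | hp
  · have := fst_add_snd_le_of_mem_Opairs (hU p hp)
    omega
  · obtain ⟨q, -, rfl⟩ := Multiset.mem_map.mp hp
    unfold reflPair
    omega

theorem phiFold_fst_lt_and_snd_lt {p q : ℕ × ℕ} (hp : p.1 ≤ 2 * d + 1 ∧ p.2 ≤ 2 * d + 1)
    (hq : q.1 ≤ 2 * d + 1 ∧ q.2 ≤ 2 * d + 1) (hfst : q.1 < p.1) (hsnd : p.2 < q.2) :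
    (phiFold d q).1 < (phiFold d p).1 ∧ (phiFold d p).2 < (phiFold d q).2 := by
  unfold phiFold reflPair
  split_ifs <;> omega

theorem phiFold_eq_or_reflPair_phiFold_eq {p : ℕ × ℕ}
    (hp : p.1 ≤ 2 * d + 1 ∧ p.2 ≤ 2 * d + 1) :
    phiFold d p = p ∨ reflPair d (phiFold d p) = p := by
  unfold phiFold
  split_ifs
  · exact .inl rfl
  · right
    ext <;> simp only [reflPair] <;> omega

end Folding

theorem statement4_general (d : ℕ) (β : Finset ℕ)
    (U : Multiset (ℕ × ℕ)) (hU : ∀ p ∈ U, p ∈ Opairs d β)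
    (t : ℕ) (ch : Fin t → ℕ × ℕ)
    (hrows : StrictAnti fun i => (ch i).1)
    (hcols : StrictMono fun i => (ch i).2)
    (hocc : ∀ i, ch i ∈ U + U.map (reflPair d)) :
    (Function.Injective (fun i : Fin t => phiFold d (ch i)) ∧
      ∀ i : Fin t, phiFold d (ch i) ∈ Opairs d β ∧ phiFold d (ch i) ∈ U) ∧
    (∃ σ : Equiv.Perm (Fin t),
      StrictAnti (fun i => (phiFold d (ch (σ i))).1) ∧
      StrictMono (fun i => (phiFold d (ch (σ i))).2)) ∧
    (∀ i : Fin t,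
      ch i ∈ (Finset.univ.val.map fun j : Fin t => phiFold d (ch j)) +
        (Finset.univ.val.map fun j : Fin t => phiFold d (ch j)).map (reflPair d)) := by
  have hbound i := le_and_le_of_mem_add_map_reflPair hU (hocc i)
  have hmemU i := phiFold_mem_of_mem_add_map_reflPair hU (hocc i)
  have hfold {i j : Fin t} (hij : i < j) :=
    phiFold_fst_lt_and_snd_lt (hbound i) (hbound j) (hrows hij) (hcols hij)
  have hanti : StrictAnti fun i => (phiFold d (ch i)).1 := fun _ _ hij => (hfold hij).1
  have hmono : StrictMono fun i => (phiFold d (ch i)).2 := fun _ _ hij => (hfold hij).2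
  refine ⟨⟨fun i j h => hanti.injective (congrArg Prod.fst h),
    fun i => ⟨hU _ (hmemU i), hmemU i⟩⟩, ⟨Equiv.refl _, hanti, hmono⟩, fun i => ?_⟩
  have hC : phiFold d (ch i) ∈ Finset.univ.val.map fun j : Fin t => phiFold d (ch j) :=
    Multiset.mem_map_of_mem _ (Finset.mem_univ_val i)
  rcases phiFold_eq_or_reflPair_phiFold_eq (hbound i) with h | h
  · exact Multiset.mem_add.mpr (.inl (h ▸ hC))
  · exact Multiset.mem_add.mpr (.inr (h ▸ Multiset.mem_map_of_mem _ hC))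

/-- Chain-folding lemma: if `U` is a multiset on `O(β)` and `D = (r₁,c₁),…,(r_t,c_t)` is
an extended `β`-chain whose elements all occur in `U + U^#`, then (i) the folded pairs
`φ(r_i,c_i)` are pairwise distinct elements of `O(β)` occurring in `U`; (ii) they can be
re-enumerated (by a permutation) as an extended `β`-chain `C`; and (iii) every element of
`D` occurs in the multiset `C + C^#`. -/
theorem statement4 (d : ℕ) (hd : 0 < d) (β : Finset ℕ) (hβ : IsId d β)
    (U : Multiset (ℕ × ℕ)) (hU : ∀ p ∈ U, p ∈ Opairs d β)
    (t : ℕ) (ch : Fin t → ℕ × ℕ)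
    (hA : ∀ i, ch i ∈ Apairs d β)
    (hrows : StrictAnti fun i => (ch i).1)
    (hcols : StrictMono fun i => (ch i).2)
    (hocc : ∀ i, ch i ∈ U + U.map (reflPair d)) :
    (Function.Injective (fun i : Fin t => phiFold d (ch i)) ∧
      ∀ i : Fin t, phiFold d (ch i) ∈ Opairs d β ∧ phiFold d (ch i) ∈ U) ∧
    (∃ σ : Equiv.Perm (Fin t),
      StrictAnti (fun i => (phiFold d (ch (σ i))).1) ∧
      StrictMono (fun i => (phiFold d (ch (σ i))).2)) ∧
    (∀ i : Fin t,
      ch i ∈ (Finset.univ.val.map fun j : Fin t => phiFold d (ch j)) +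
        (Finset.univ.val.map fun j : Fin t => phiFold d (ch j)).map (reflPair d)) :=
  statement4_general d β U hU t ch hrows hcols hocc
end

section
/- Let k be a field and consider the polynomial ring in variables X_{(r,c)} indexed by pairs of positive integers, where the variables are linearly ordered by: X_{(r,c)} > X_{(r',c')} if and only if r > r', or r = r' and c < c'. Equip monomials with the homogeneous (degree-then-lexicographic) order determined by this order on the variables. Fix integers R₁ < R₂ < … < R_k and C₁ < C₂ < … < C_k, and let M be the k×k matrix with entries M_{ij} = X_{(R_i, C_j)}. Then the initial (leading) term of det M with respect to this monomial order is (−1)^{k(k−1)/2} · ∏_{i=1}^{k} X_{(R_{k+1−i}, C_i)}, the antidiagonal product; in particular, the index pairs (R_k, C₁), (R_{k−1}, C₂), …, (R₁, C_k) of the initial monomial have strictly decreasing rows and strictly increasing columns. -/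
/-- The order on the variables `X_{(r,c)}`: `X_{(r,c)} > X_{(r',c')}` iff `r > r'`, or
`r = r'` and `c < c'`.  `varLT p q` says that the variable `X_p` is smaller than `X_q`. -/
def varLT (p q : ℕ × ℕ) : Prop :=
  p.1 < q.1 ∨ (p.1 = q.1 ∧ q.2 < p.2)

/-- The total degree of a monomial (exponent vector). -/
def monDeg (m : (ℕ × ℕ) →₀ ℕ) : ℕ := m.sum fun _ e => e

/-- The homogeneous lexicographic order on monomials determined by `varLT`: first
compare total degrees; in case of equal degrees, `m < m'` iff at some variable `v` we
have `m v < m' v` while `m` and `m'` agree on all variables larger than `v`. -/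
def hlexLT (m m' : (ℕ × ℕ) →₀ ℕ) : Prop :=
  monDeg m < monDeg m' ∨
    (monDeg m = monDeg m' ∧ ∃ v : ℕ × ℕ, m v < m' v ∧ ∀ w : ℕ × ℕ, varLT v w → m w = m' w)

/-!
In the Leibniz expansion of `det (X_{(R_i, C_j)})` the permutation `σ` contributes `sign σ`
times the squarefree monomial `∏ⱼ X_{(R_{σ j}, C_j)}` of degree `k`. Distinct permutations give
distinct monomials, so nothing cancels and the antidiagonal monomial has coefficient
`sign rev = (-1)^{k(k-1)/2}`, every pair being an inversion of `rev`. If `σ ≠ rev` and `j₀` is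
the first column where they differ, then `X_{(R_{rev j₀}, C_{j₀})}` divides the antidiagonal
monomial but not that of `σ`, and the two monomials agree on all larger variables: the rows
larger than `R_{rev j₀}` are filled by the columns before `j₀` in both, and in row `R_{rev j₀}`
neither uses a column before `C_{j₀}`.
-/

open MvPolynomial Equiv

theorem Fin.sign_revPerm (n : ℕ) :
    Perm.sign (Fin.revPerm : Perm (Fin n)) = (-1) ^ (n * (n - 1) / 2) := by
  have inversions (j : Fin n) :
      ∏ i ∈ Finset.Iio j, (if Fin.revPerm i < Fin.revPerm j then 1 else -1 : ℤˣ) =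
        (-1) ^ (j : ℕ) := by
    rw [Finset.prod_congr rfl fun i hi => if_neg (by simpa using (Finset.mem_Iio.mp hi).le),
      Finset.prod_const, Fin.card_Iio]
  simp_rw [Perm.sign_eq_prod_prod_Iio, inversions, Finset.prod_pow_eq_pow_sum,
    Fin.sum_univ_eq_sum_range (fun i => i), Finset.sum_range_id]

theorem exists_ne_and_forall_lt_eq {ι α : Type*} [LinearOrder ι] [WellFoundedLT ι]
    {f g : ι → α} (h : f ≠ g) : ∃ i, f i ≠ g i ∧ ∀ j < i, f j = g j := by
  obtain ⟨i, hi, hmin⟩ := wellFounded_lt.has_min {j | f j ≠ g j} (Function.ne_iff.mp h)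
  exact ⟨i, hi, fun j hj => not_not.mp fun hne => hmin j hne hj⟩

theorem varLT_mk_iff {k : ℕ} {R C : Fin k → ℕ} (hR : StrictMono R) (hC : StrictMono C)
    (i j a b : Fin k) : varLT (R i, C j) (R a, C b) ↔ i < a ∨ (i = a ∧ b < j) := by
  simp only [varLT, hR.lt_iff_lt, hR.injective.eq_iff, hC.lt_iff_lt]

section permMonomial

variable {k : ℕ} {R C : Fin k → ℕ}

noncomputable def permMonomial (R C : Fin k → ℕ) (σ : Fin k → Fin k) : (ℕ × ℕ) →₀ ℕ :=
  ∑ j, Finsupp.single (R (σ j), C j) 1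

theorem permMonomial_apply_mk (hR : Function.Injective R) (hC : Function.Injective C)
    (σ : Fin k → Fin k) (a b : Fin k) :
    permMonomial R C σ (R a, C b) = if σ b = a then 1 else 0 := by
  simp only [permMonomial, Finsupp.finsetSum_apply, Finsupp.single_apply, Prod.mk.injEq,
    hR.eq_iff, hC.eq_iff]
  rw [Finset.sum_eq_single b (fun j _ hj => if_neg fun h => hj h.2) (by simp)]
  simp only [and_true]

theorem permMonomial_apply_of_forall_ne {p : ℕ × ℕ} (hp : ∀ a b, (R a, C b) ≠ p)
    (σ : Fin k → Fin k) : permMonomial R C σ p = 0 := by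
  simp [permMonomial, Finsupp.finsetSum_apply, hp]

theorem permMonomial_injective (hR : Function.Injective R) (hC : Function.Injective C) :
    Function.Injective (permMonomial R C) := by
  intro σ τ h
  funext b
  have := congrArg (· (R (σ b), C b)) h
  simp only [permMonomial_apply_mk hR hC] at this
  simpa [eq_comm] using this

theorem monDeg_permMonomial (σ : Fin k → Fin k) : monDeg (permMonomial R C σ) = k := by
  rw [monDeg, permMonomial, ← Finsupp.sum_finsetSum_index (fun _ => rfl) (fun _ _ _ => rfl)]
  simp [Finsupp.sum_single_index]

theorem hlexLT_permMonomial_rev (hR : StrictMono R) (hC : StrictMono C) {σ : Fin k → Fin k}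
    (hσ : Function.Injective σ) (hne : σ ≠ Fin.rev) :
    hlexLT (permMonomial R C σ) (permMonomial R C Fin.rev) := by
  obtain ⟨j₀, hj₀, hbefore⟩ := exists_ne_and_forall_lt_eq hne
  have agree_above (a b : Fin k) (hab : j₀.rev < a ∨ (j₀.rev = a ∧ b < j₀)) :
      σ b = a ↔ b.rev = a := by
    rcases lt_or_ge b j₀ with hb | hb
    · rw [hbefore b hb]
    have ha : a.rev < j₀ := by
      rcases hab with ha | ⟨rfl, hb'⟩
      · exact Fin.rev_lt_iff.mp ha
      · exact absurd hb (not_le.mpr hb')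
    have hb_ne : b ≠ a.rev := fun h => (h ▸ ha).not_ge hb
    exact ⟨fun h => absurd (hσ (h.trans (by simpa using (hbefore _ ha).symm))) hb_ne,
      fun h => absurd (by rw [← h, Fin.rev_rev]) hb_ne⟩
  refine Or.inr ⟨by rw [monDeg_permMonomial, monDeg_permMonomial], (R j₀.rev, C j₀), ?_, ?_⟩
  · simp [permMonomial_apply_mk hR.injective hC.injective, hj₀]
  · rintro ⟨r, c⟩ hw
    by_cases hp : ∃ a b, (R a, C b) = (r, c)
    · obtain ⟨a, b, hab⟩ := hp
      rw [← hab, varLT_mk_iff hR hC] at hw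
      simp only [← hab, permMonomial_apply_mk hR.injective hC.injective,
        agree_above a b hw]
    · push Not at hp
      rw [permMonomial_apply_of_forall_ne hp, permMonomial_apply_of_forall_ne hp]

variable {K : Type*} [CommRing K]

theorem prod_X_eq_monomial_permMonomial (σ : Fin k → Fin k) :
    ∏ j, (X (R (σ j), C j) : MvPolynomial (ℕ × ℕ) K) = monomial (permMonomial R C σ) 1 := by
  rw [permMonomial, monomial_sum_one]
  rfl

theorem coeff_det_X (m : (ℕ × ℕ) →₀ ℕ) :
    coeff m (Matrix.of fun i j => (X (R i, C j) : MvPolynomial (ℕ × ℕ) K)).det =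
      ∑ σ : Perm (Fin k), if permMonomial R C σ = m then (Perm.sign σ : K) else 0 := by
  rw [Matrix.det_apply, coeff_sum]
  refine Finset.sum_congr rfl fun σ _ => ?_
  rw [Units.smul_def, coeff_smul]
  simp only [Matrix.of_apply, prod_X_eq_monomial_permMonomial, coeff_monomial]
  split_ifs <;> simp

theorem coeff_permMonomial_det (hR : Function.Injective R) (hC : Function.Injective C)
    (τ : Perm (Fin k)) :
    coeff (permMonomial R C τ)
      (Matrix.of fun i j => (X (R i, C j) : MvPolynomial (ℕ × ℕ) K)).det = Perm.sign τ := by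
  simp only [coeff_det_X, (permMonomial_injective hR hC).eq_iff, DFunLike.coe_fn_eq]
  simp

theorem exists_perm_of_mem_support_det {m : (ℕ × ℕ) →₀ ℕ}
    (hm : m ∈ (Matrix.of fun i j => (X (R i, C j) : MvPolynomial (ℕ × ℕ) K)).det.support) :
    ∃ σ : Perm (Fin k), permMonomial R C σ = m := by
  rw [mem_support_iff, coeff_det_X] at hm
  obtain ⟨σ, -, hσ⟩ := Finset.exists_ne_zero_of_sum_ne_zero hm
  exact ⟨σ, of_not_not fun h => hσ (if_neg h)⟩

end permMonomial

theorem statement6_general (K : Type*) [Field K] (k : ℕ)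
    (R C : Fin k → ℕ)
    (hR : StrictMono R) (hC : StrictMono C)
    (M : Matrix (Fin k) (Fin k) (MvPolynomial (ℕ × ℕ) K))
    (hM : ∀ i j, M i j = MvPolynomial.X (R i, C j))
    (m₀ : (ℕ × ℕ) →₀ ℕ)
    (hm₀ : m₀ = ∑ i : Fin k, Finsupp.single (R i.rev, C i) 1) :
    MvPolynomial.coeff m₀ M.det = (-1 : K) ^ (k * (k - 1) / 2) ∧
    (∀ m ∈ M.det.support, m ≠ m₀ → hlexLT m m₀) ∧
    StrictAnti (fun i : Fin k => R i.rev) ∧ StrictMono C := by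
  obtain rfl : M = Matrix.of fun i j => X (R i, C j) := Matrix.ext hM
  obtain rfl : m₀ = permMonomial R C Fin.revPerm := hm₀
  refine ⟨?_, ?_, fun a b hab => hR (Fin.rev_lt_rev.mpr hab), hC⟩
  · rw [coeff_permMonomial_det hR.injective hC.injective, Fin.sign_revPerm]
    push_cast
    rfl
  · rintro m hm hne
    obtain ⟨σ, rfl⟩ := exists_perm_of_mem_support_det hm
    exact hlexLT_permMonomial_rev hR hC σ.injective fun h => hne (by rw [h]; rfl)

/-- Let `M` be the `k × k` matrix with entries `M_{ij} = X_{(R_i, C_j)}`, where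
`R₁ < ⋯ < R_k` and `C₁ < ⋯ < C_k` are positive integers.  With respect to the
homogeneous lexicographic order on monomials determined by `varLT`, the initial term of
`det M` is `(−1)^{k(k−1)/2} ∏_{i=1}^k X_{(R_{k+1−i}, C_i)}`, the antidiagonal term: the
antidiagonal monomial `m₀` occurs in `det M` with coefficient `(−1)^{k(k−1)/2}`, every
other monomial of `det M` is strictly smaller than `m₀`, and the index pairs of `m₀`
have strictly decreasing rows and strictly increasing columns. -/
theorem statement6 (K : Type*) [Field K] (k : ℕ) (hk : 0 < k)
    (R C : Fin k → ℕ) (hR1 : ∀ i, 0 < R i) (hC1 : ∀ i, 0 < C i)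
    (hR : StrictMono R) (hC : StrictMono C)
    (M : Matrix (Fin k) (Fin k) (MvPolynomial (ℕ × ℕ) K))
    (hM : ∀ i j, M i j = MvPolynomial.X (R i, C j))
    (m₀ : (ℕ × ℕ) →₀ ℕ)
    (hm₀ : m₀ = ∑ i : Fin k, Finsupp.single (R i.rev, C i) 1) :
    MvPolynomial.coeff m₀ M.det = (-1 : K) ^ (k * (k - 1) / 2) ∧
    (∀ m ∈ M.det.support, m ≠ m₀ → hlexLT m m₀) ∧
    StrictAnti (fun i : Fin k => R i.rev) ∧ StrictMono C :=
  statement6_general K k R C hR hC M hM m₀ hm₀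
end
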